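/- Let A be a bounded linear operator on a nontrivial complex Hilbert space H. For t ∈ [0, 2π), define b_x(t) = sup_{‖x‖=1} Re(e^{it}⟨A x, x⟩) − inf_{‖x‖=1} Re(e^{it}⟨A x, x⟩) and b_y(t) = sup_{‖x‖=1} Im(e^{it}⟨A x, x⟩) − inf_{‖x‖=1} Im(e^{it}⟨A x, x⟩). Then for every t ∈ [0, 2π), ‖A*A − AA*‖ ≤ b_x(t)·b_y(t). -/

import Mathlib

/-!
Put `c = exp (t * I)` and `T = star c • A`. Since `inner` is conjugate-linear in its first
argument, `⟪T x, x⟫ = c * ⟪A x, x⟫`, and `T` has the same self-commutator as `A` because `|c| = 1`.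
Writing `T = ℜ T + I • ℑ T`, one has `T⋆T - TT⋆ = 2I(ℜT ℑT - ℑT ℜT)`, and the numerical ranges of
the self-adjoint operators `ℜ T`, `ℑ T` are the projections of that of `T` onto the two axes (up
to a reflection). The commutator does not change when `ℜ T` and `ℑ T` are shifted by the midpoints
of their numerical ranges, and the norm of a self-adjoint operator is the supremum of
`|⟪S x, x⟫|` over unit vectors, so the shifted operators have norms at most half the widths.
Hence `‖T⋆T - TT⋆‖ ≤ 2 · 2 · (b_x / 2) · (b_y / 2) = b_x · b_y`.
-/

open ContinuousLinearMap RCLike Set Bornology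
open scoped ComplexStarModule

section SelfAdjoint

variable {𝕜 E : Type*} [RCLike 𝕜] [NormedAddCommGroup E] [InnerProductSpace 𝕜 E]

theorem ContinuousLinearMap.norm_inner_apply_self_le (T : E →L[𝕜] E) {x : E} (hx : ‖x‖ = 1) :
    ‖inner 𝕜 (T x) x‖ ≤ ‖T‖ :=
  calc ‖inner 𝕜 (T x) x‖ ≤ ‖T x‖ * ‖x‖ := norm_inner_le_norm _ _
    _ ≤ ‖T‖ * ‖x‖ * ‖x‖ := by gcongr; exact T.le_opNorm x
    _ = ‖T‖ := by rw [hx, mul_one, mul_one]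

variable [CompleteSpace E]

theorem IsSelfAdjoint.norm_le_of_abs_re_inner_le {S : E →L[𝕜] E} (hS : IsSelfAdjoint S)
    {r : ℝ} (hr : 0 ≤ r) (h : ∀ x : E, ‖x‖ = 1 → |re (inner 𝕜 (S x) x)| ≤ r) : ‖S‖ ≤ r := by
  rw [S.norm_eq_iSup_rayleighQuotient hS.isSymmetric]
  refine ciSup_le fun x ↦ ?_
  rcases eq_or_ne x 0 with rfl | hx
  · simpa using hr
  · have hu : ‖((‖x‖⁻¹ : ℝ) : 𝕜) • x‖ = 1 := by simp [norm_smul, hx]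
    rw [← S.rayleigh_smul x (c := ((‖x‖⁻¹ : ℝ) : 𝕜)) (by simp [hx]), rayleighQuotient,
      reApplyInnerSelf_apply, hu, one_pow, div_one]
    exact h _ hu

theorem IsSelfAdjoint.norm_sub_midpoint_smul_one_le {S : E →L[𝕜] E} (hS : IsSelfAdjoint S)
    {m M : ℝ} (hmM : m ≤ M) (h : ∀ x : E, ‖x‖ = 1 → re (inner 𝕜 (S x) x) ∈ Icc m M) :
    ‖S - (((m + M) / 2 : ℝ) : 𝕜) • 1‖ ≤ (M - m) / 2 := by
  have hc : IsSelfAdjoint ((((m + M) / 2 : ℝ) : 𝕜) • (1 : E →L[𝕜] E)) :=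
    .smul (conj_ofReal _) (.one _)
  refine (hS.sub hc).norm_le_of_abs_re_inner_le (by linarith) fun x hx ↦ ?_
  have hxx : inner 𝕜 x x = (1 : 𝕜) := by simp [inner_self_eq_norm_sq_to_K, hx]
  simp only [sub_apply, smul_apply, one_apply_eq_self, inner_sub_left, inner_smul_left, hxx,
    conj_ofReal, mul_one, map_sub, ofReal_re]
  obtain ⟨hm, hM⟩ := h x hx
  rw [abs_le]
  constructor <;> linarith

end SelfAdjoint

theorem norm_mul_sub_mul_le_two_mul_norm_sub_algebraMap {𝕜 R : Type*} [CommSemiring 𝕜]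
    [NormedRing R] [Algebra 𝕜 R] (p q : R) (a b : 𝕜) :
    ‖p * q - q * p‖ ≤ 2 * ‖p - algebraMap 𝕜 R a‖ * ‖q - algebraMap 𝕜 R b‖ := by
  set p' := p - algebraMap 𝕜 R a
  set q' := q - algebraMap 𝕜 R b
  have hpq : p * q - q * p = p' * q' - q' * p' := by
    simp only [p', q', sub_mul, mul_sub, Algebra.commutes a q, ← Algebra.commutes b p,
      Algebra.commutes a (algebraMap 𝕜 R b)]
    abel
  calc ‖p * q - q * p‖ ≤ ‖p' * q'‖ + ‖q' * p'‖ := hpq ▸ norm_sub_le _ _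
    _ ≤ ‖p'‖ * ‖q'‖ + ‖q'‖ * ‖p'‖ := add_le_add (norm_mul_le _ _) (norm_mul_le _ _)
    _ = 2 * ‖p'‖ * ‖q'‖ := by ring

theorem star_smul_mul_smul_sub_smul_mul_star_smul {K R : Type*} [CommSemiring K] [StarRing K]
    [Ring R] [StarRing R] [Module K R] [StarModule K R] [IsScalarTower K R R]
    [SMulCommClass K R R] {u : K} (hu : star u * u = 1) (a : R) :
    star (u • a) * (u • a) - (u • a) * star (u • a) = star a * a - a * star a := by
  rw [star_smul, smul_mul_smul_comm, smul_mul_smul_comm, hu, mul_comm, hu, one_smul, one_smul]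

section Complex

variable {H : Type*} [NormedAddCommGroup H] [InnerProductSpace ℂ H] [CompleteSpace H]

theorem ContinuousLinearMap.inner_adjoint_apply_self (T : H →L[ℂ] H) (x : H) :
    inner ℂ (adjoint T x) x = starRingEnd ℂ (inner ℂ (T x) x) := by
  rw [adjoint_inner_left, inner_conj_symm]

theorem ContinuousLinearMap.re_inner_realPart_apply_self (T : H →L[ℂ] H) (x : H) :
    (inner ℂ ((ℜ T : H →L[ℂ] H) x) x).re = (inner ℂ (T x) x).re := by
  rw [realPart_apply_coe, star_eq_adjoint, smul_apply, add_apply, real_smul_eq_coe_smul (K := ℂ),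
    inner_smul_left, inner_add_left, inner_adjoint_apply_self, Complex.add_conj]
  simp

theorem ContinuousLinearMap.re_inner_imaginaryPart_apply_self (T : H →L[ℂ] H) (x : H) :
    (inner ℂ ((ℑ T : H →L[ℂ] H) x) x).re = -(inner ℂ (T x) x).im := by
  rw [imaginaryPart_apply_coe, star_eq_adjoint, smul_apply, smul_apply, sub_apply,
    real_smul_eq_coe_smul (K := ℂ), inner_smul_left, inner_smul_left, inner_sub_left,
    inner_adjoint_apply_self, Complex.sub_conj]
  simp

theorem ContinuousLinearMap.norm_star_mul_self_sub_self_mul_star_le (T : H →L[ℂ] H)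
    {mx Mx my My : ℝ} (hx : mx ≤ Mx) (hy : my ≤ My)
    (hre : ∀ x : H, ‖x‖ = 1 → (inner ℂ (T x) x).re ∈ Icc mx Mx)
    (him : ∀ x : H, ‖x‖ = 1 → (inner ℂ (T x) x).im ∈ Icc my My) :
    ‖star T * T - T * star T‖ ≤ (Mx - mx) * (My - my) := by
  have hP := (ℜ T).prop.norm_sub_midpoint_smul_one_le hx fun x hx ↦ by
    simpa only [re_to_complex, re_inner_realPart_apply_self] using hre x hx
  have hQ := (ℑ T).prop.norm_sub_midpoint_smul_one_le (neg_le_neg hy) fun x hx ↦ by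
    simpa only [re_to_complex, re_inner_imaginaryPart_apply_self, mem_Icc, neg_le_neg_iff,
      and_comm] using him x hx
  rw [← Algebra.algebraMap_eq_smul_one] at hP hQ
  rw [neg_sub_neg] at hQ
  have hPQ := norm_mul_sub_mul_le_two_mul_norm_sub_algebraMap (ℜ T : H →L[ℂ] H) (ℑ T)
    (((mx + Mx) / 2 : ℝ) : ℂ) (((-My + -my) / 2 : ℝ) : ℂ)
  calc ‖star T * T - T * star T‖ = 2 * ‖(ℜ T : H →L[ℂ] H) * ℑ T - ℑ T * ℜ T‖ := by
        rw [star_mul_self_sub_self_mul_star, two_nsmul, ← two_smul ℂ, smul_smul, norm_smul]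
        norm_num
    _ ≤ 2 * (2 * ((Mx - mx) / 2) * ((My - my) / 2)) := by
        grw [hPQ]
        gcongr
        exacts [hP, hQ]
    _ = (Mx - mx) * (My - my) := by ring

end Complex

theorem selfCommutator_norm_le_width_mul_width
    {H : Type*} [NormedAddCommGroup H] [InnerProductSpace ℂ H] [CompleteSpace H]
    (A : H →L[ℂ] H) (t : ℝ) :
    ‖adjoint A ∘L A - A ∘L adjoint A‖ ≤
      (sSup ((fun x : H => (Complex.exp (t * Complex.I) * (inner ℂ (A x) x : ℂ)).re) ''
          {x : H | ‖x‖ = 1}) -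
        sInf ((fun x : H => (Complex.exp (t * Complex.I) * (inner ℂ (A x) x : ℂ)).re) ''
          {x : H | ‖x‖ = 1})) *
      (sSup ((fun x : H => (Complex.exp (t * Complex.I) * (inner ℂ (A x) x : ℂ)).im) ''
          {x : H | ‖x‖ = 1}) -
        sInf ((fun x : H => (Complex.exp (t * Complex.I) * (inner ℂ (A x) x : ℂ)).im) ''
          {x : H | ‖x‖ = 1})) := by
  set c := Complex.exp (t * Complex.I)
  have hc : star (star c) * star c = 1 := by
    rw [star_star, Complex.star_def, Complex.mul_conj', Complex.norm_exp_ofReal_mul_I]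
    norm_num
  set T := star c • A
  have hT (x : H) : c * inner ℂ (A x) x = inner ℂ (T x) x := by
    simp [T, mul_comm]
  have hcomm : adjoint A ∘L A - A ∘L adjoint A = star T * T - T * star T :=
    (star_smul_mul_smul_sub_smul_mul_star_smul hc A).symm
  simp only [hT, hcomm]
  have hbdd (g : ℂ → ℝ) (hg : ∀ z, |g z| ≤ ‖z‖) :
      IsBounded ((fun x ↦ g (inner ℂ (T x) x)) '' {x : H | ‖x‖ = 1}) :=
    isBounded_iff_forall_norm_le.2 ⟨‖T‖, by
      rintro _ ⟨x, hx, rfl⟩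
      exact (hg _).trans (T.norm_inner_apply_self_le hx)⟩
  have hre := hbdd Complex.re Complex.abs_re_le_norm
  have him := hbdd Complex.im Complex.abs_im_le_norm
  exact T.norm_star_mul_self_sub_self_mul_star_le
    (Real.sInf_le_sSup _ hre.bddBelow hre.bddAbove) (Real.sInf_le_sSup _ him.bddBelow him.bddAbove)
    (fun x hx ↦ subset_Icc_csInf_csSup hre.bddBelow hre.bddAbove (mem_image_of_mem _ hx))
    (fun x hx ↦ subset_Icc_csInf_csSup him.bddBelow him.bddAbove (mem_image_of_mem _ hx))
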